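/- arXiv:2304.13580 — 6 statements merged into one kernel-verified Lean document; each statement's English description precedes it below -/
import Mathlib

section
/- (Wagner–Preston representation theorem) Every inverse semigroup S can be embedded in the symmetric inverse monoid on its underlying set: there is an injective map λ : S → I(S), where I(S) is the monoid of all partial bijections of the set S (bijections between subsets of S) under composition of partial functions, such that λ(a·b) = λ(a) ∘ λ(b) for all a, b ∈ S. Explicitly, one may take λ(a) to be the bijection from the subset a⁻¹·a·S onto the subset a·a⁻¹·S given by x ↦ a·x. -/
/-!
Uniqueness of inverses forces idempotents to commute: for idempotents `e, f`, the element
`f * e` is an inverse of `e * f`, and `e * f` is itself idempotent, hence self-inverse. Commuting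
idempotents give `(a * b)⁻¹ = b⁻¹ * a⁻¹`, which is exactly what makes the domain of
`x ↦ a * b * x` equal to that of the composite `x ↦ a * (b * x)`. Injectivity comes from
evaluating `λ(a)` at the idempotent `a⁻¹ * a`, where it takes the value `a`.
-/

open Classical

structure IsInverseSemigroupInv {S : Type*} [Semigroup S] (inv : S → S) : Prop where
  mul_inv_mul : ∀ a, a * inv a * a = a
  inv_mul_inv : ∀ a, inv a * a * inv a = inv a
  eq_inv_of_mul_mul : ∀ a b, a * b * a = a → b * a * b = b → b = inv a

theorem IsIdempotentElem.exists_eq_mul_iff {S : Type*} [Semigroup S] {e : S}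
    (he : IsIdempotentElem e) (x : S) : (∃ y, x = e * y) ↔ e * x = x :=
  ⟨fun ⟨y, hy⟩ => hy ▸ he.mul_self_mul y, fun h => ⟨x, h.symm⟩⟩

section PartialMulLeft

variable {S : Type*} [Semigroup S]

noncomputable def partialMulLeft (a b : S) (hab : a * b * a = a) (hba : b * a * b = b) :
    S ≃. S where
  toFun x := if b * a * x = x then some (a * x) else none
  invFun x := if a * b * x = x then some (b * x) else none
  inv x y := by
    by_cases hx : b * a * x = x <;> by_cases hy : a * b * y = y <;>
      simp only [hx, hy, if_true, if_false, Option.some_inj, reduceCtorEq, iff_false,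
        false_iff, iff_self]
    · constructor
      · rintro rfl; rw [← mul_assoc, hy]
      · rintro rfl; rw [← mul_assoc, hx]
    · rintro rfl; exact hy (by rw [← mul_assoc, hab])
    · rintro rfl; exact hx (by rw [← mul_assoc, hba])

theorem mem_partialMulLeft_iff {a b : S} {hab : a * b * a = a} {hba : b * a * b = b}
    {x y : S} : y ∈ partialMulLeft a b hab hba x ↔ b * a * x = x ∧ a * x = y := by
  by_cases hx : b * a * x = x <;>
    simp [partialMulLeft, hx]

end PartialMulLeft

namespace IsInverseSemigroupInv

variable {S : Type*} [Semigroup S] {inv : S → S}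

theorem inv_inv (hS : IsInverseSemigroupInv inv) (a : S) : inv (inv a) = a :=
  (hS.eq_inv_of_mul_mul (inv a) a (hS.inv_mul_inv a) (hS.mul_inv_mul a)).symm

theorem isIdempotentElem_inv_mul (hS : IsInverseSemigroupInv inv) (a : S) :
    IsIdempotentElem (inv a * a) := by
  rw [IsIdempotentElem, ← mul_assoc, hS.inv_mul_inv]

theorem isIdempotentElem_mul_inv (hS : IsInverseSemigroupInv inv) (a : S) :
    IsIdempotentElem (a * inv a) := by
  rw [IsIdempotentElem, ← mul_assoc, hS.mul_inv_mul]

theorem inv_eq_self_of_isIdempotentElem (hS : IsInverseSemigroupInv inv) {e : S}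
    (he : IsIdempotentElem e) : inv e = e :=
  (hS.eq_inv_of_mul_mul e e (by rw [he.eq, he.eq]) (by rw [he.eq, he.eq])).symm

theorem isIdempotentElem_mul (hS : IsInverseSemigroupInv inv) {e f : S}
    (he : IsIdempotentElem e) (hf : IsIdempotentElem f) : IsIdempotentElem (e * f) := by
  set x := inv (e * f)
  -- `f * x * e` is another inverse of `e * f`, so it is `x`; this makes `x` idempotent.
  have hfxe : f * x * e = x := by
    refine hS.eq_inv_of_mul_mul (e * f) (f * x * e) ?_ ?_
    · calc e * f * (f * x * e) * (e * f) = e * (f * f) * x * (e * e) * f := by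
            simp only [mul_assoc]
        _ = e * f * x * (e * f) := by rw [he.eq, hf.eq]; simp only [mul_assoc]
        _ = e * f := hS.mul_inv_mul _
    · calc f * x * e * (e * f) * (f * x * e) = f * (x * ((e * e) * (f * f)) * x) * e := by
            simp only [mul_assoc]
        _ = f * x * e := by rw [he.eq, hf.eq, hS.inv_mul_inv]
  have hx : IsIdempotentElem x := by
    calc x * x = f * (x * (e * f) * x) * e := by
          conv_lhs => rw [← hfxe]
          simp only [mul_assoc]
      _ = x := by rw [hS.inv_mul_inv, hfxe]
  rw [← hS.inv_inv (e * f), hS.inv_eq_self_of_isIdempotentElem hx]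
  exact hx

theorem commute_of_isIdempotentElem (hS : IsInverseSemigroupInv inv) {e f : S}
    (he : IsIdempotentElem e) (hf : IsIdempotentElem f) : Commute e f := by
  have hef := hS.isIdempotentElem_mul he hf
  have hfe := hS.isIdempotentElem_mul hf he
  -- `f * e` is an inverse of the idempotent `e * f`, which is its own inverse.
  have : f * e = inv (e * f) := by
    refine hS.eq_inv_of_mul_mul (e * f) (f * e) ?_ ?_
    · calc e * f * (f * e) * (e * f) = e * (f * f) * ((e * e) * f) := by simp only [mul_assoc]
        _ = e * f := by rw [he.eq, hf.eq, hef.eq]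
    · calc f * e * (e * f) * (f * e) = f * (e * e) * ((f * f) * e) := by simp only [mul_assoc]
        _ = f * e := by rw [he.eq, hf.eq, hfe.eq]
  rw [Commute, SemiconjBy, this, hS.inv_eq_self_of_isIdempotentElem hef]

theorem inv_mul (hS : IsInverseSemigroupInv inv) (a b : S) :
    inv (a * b) = inv b * inv a := by
  have hc := hS.commute_of_isIdempotentElem (hS.isIdempotentElem_mul_inv b)
    (hS.isIdempotentElem_inv_mul a)
  refine (hS.eq_inv_of_mul_mul _ _ ?_ ?_).symm
  · calc a * b * (inv b * inv a) * (a * b) = a * ((b * inv b) * (inv a * a)) * b := by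
          simp only [mul_assoc]
      _ = a * inv a * a * (b * inv b * b) := by rw [hc.eq]; simp only [mul_assoc]
      _ = a * b := by rw [hS.mul_inv_mul, hS.mul_inv_mul]
  · calc inv b * inv a * (a * b) * (inv b * inv a)
          = inv b * ((inv a * a) * (b * inv b)) * inv a := by simp only [mul_assoc]
      _ = inv b * b * inv b * (inv a * a * inv a) := by rw [← hc.eq]; simp only [mul_assoc]
      _ = inv b * inv a := by rw [hS.inv_mul_inv, hS.inv_mul_inv]

/-- `dom λ(ab) = dom λ(b) ∩ λ(b)⁻¹ (dom λ(a))`, where `dom λ(a) = {x | inv a * a * x = x}`.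
-/
theorem inv_mul_self_mul_eq_iff (hS : IsInverseSemigroupInv inv) (a b x : S) :
    inv (a * b) * (a * b) * x = x ↔ inv b * b * x = x ∧ inv a * a * (b * x) = b * x := by
  have hc := hS.commute_of_isIdempotentElem (hS.isIdempotentElem_mul_inv b)
    (hS.isIdempotentElem_inv_mul a)
  have hassoc : inv (a * b) * (a * b) * x = inv b * (inv a * a * (b * x)) := by
    rw [hS.inv_mul]; simp only [mul_assoc]
  rw [hassoc]
  constructor
  · intro hx
    have hbx : b * inv b * (inv a * a) * (b * x) = b * x := by
      conv_rhs => rw [← hx]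
      simp only [mul_assoc]
    refine ⟨?_, ?_⟩
    · calc inv b * b * x = inv b * b * (inv b * (inv a * a * (b * x))) := by rw [hx]
        _ = inv b * b * inv b * (inv a * a * (b * x)) := by simp only [mul_assoc]
        _ = x := by rw [hS.inv_mul_inv, hx]
    · calc inv a * a * (b * x) = inv a * a * (b * inv b * (inv a * a) * (b * x)) := by rw [hbx]
        _ = (inv a * a * (inv a * a)) * (b * inv b) * (b * x) := by
          rw [hc.eq]; simp only [mul_assoc]
        _ = b * x := by rw [(hS.isIdempotentElem_inv_mul a).eq, ← hc.eq, hbx]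
  · rintro ⟨hx, hbx⟩
    rw [hbx, ← mul_assoc, hx]

/-- The partial bijection `λ(a) : inv a * a * S → a * inv a * S`, `x ↦ a * x`. -/
noncomputable def wagnerPreston (hS : IsInverseSemigroupInv inv) (a : S) : S ≃. S :=
  partialMulLeft a (inv a) (hS.mul_inv_mul a) (hS.inv_mul_inv a)

theorem mem_wagnerPreston_iff (hS : IsInverseSemigroupInv inv) {a x y : S} :
    y ∈ hS.wagnerPreston a x ↔ inv a * a * x = x ∧ a * x = y :=
  mem_partialMulLeft_iff

theorem wagnerPreston_apply (hS : IsInverseSemigroupInv inv) (a x : S) :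
    hS.wagnerPreston a x = if ∃ y, x = inv a * a * y then some (a * x) else none := by
  show (if inv a * a * x = x then some (a * x) else none) = _
  exact if_congr ((hS.isIdempotentElem_inv_mul a).exists_eq_mul_iff x).symm rfl rfl

theorem wagnerPreston_injective (hS : IsInverseSemigroupInv inv) :
    Function.Injective hS.wagnerPreston := by
  -- Evaluating `λ(a) = λ(b)` at the idempotent `inv a * a` recovers `a`.
  have key : ∀ {a b : S}, hS.wagnerPreston a = hS.wagnerPreston b →
      inv b * b * (inv a * a) = inv a * a ∧ b * (inv a * a) = a := by
    intro a b hab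
    have ha : a ∈ hS.wagnerPreston a (inv a * a) :=
      hS.mem_wagnerPreston_iff.2 ⟨(hS.isIdempotentElem_inv_mul a).eq, by
        rw [← mul_assoc, hS.mul_inv_mul]⟩
    rwa [hab, hS.mem_wagnerPreston_iff] at ha
  intro a b hab
  obtain ⟨hfe, hba⟩ := key hab
  obtain ⟨hef, -⟩ := key hab.symm
  have he_eq_f : inv a * a = inv b * b := by
    rw [← hfe, ← (hS.commute_of_isIdempotentElem (hS.isIdempotentElem_inv_mul a)
      (hS.isIdempotentElem_inv_mul b)).eq, hef]
  rw [← hba, he_eq_f, ← mul_assoc, hS.mul_inv_mul]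

theorem wagnerPreston_mul (hS : IsInverseSemigroupInv inv) (a b : S) :
    hS.wagnerPreston (a * b) = (hS.wagnerPreston b).trans (hS.wagnerPreston a) := by
  ext x y
  rw [← Option.mem_def, ← Option.mem_def, PEquiv.mem_trans, mem_wagnerPreston_iff,
    hS.inv_mul_self_mul_eq_iff]
  simp only [mem_wagnerPreston_iff]
  constructor
  · rintro ⟨⟨hx, hbx⟩, rfl⟩
    exact ⟨b * x, ⟨hx, rfl⟩, hbx, (mul_assoc a b x).symm⟩
  · rintro ⟨_, ⟨hx, rfl⟩, hbx, rfl⟩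
    exact ⟨⟨hx, hbx⟩, mul_assoc a b x⟩

end IsInverseSemigroupInv

/-- Composition `λ(a) ∘ λ(b)` (first `b`, then `a`) is `(lam b).trans (lam a)`. -/
theorem wagner_preston {S : Type*} [Semigroup S] (inv : S → S)
    (h1 : ∀ a : S, a * inv a * a = a)
    (h2 : ∀ a : S, inv a * a * inv a = inv a)
    (huniq : ∀ a b : S, a * b * a = a → b * a * b = b → b = inv a) :
    ∃ lam : S → (S ≃. S),
      Function.Injective lam ∧
      (∀ a b : S, lam (a * b) = (lam b).trans (lam a)) ∧
      (∀ a x : S,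
        (lam a) x = if ∃ y : S, x = inv a * a * y then some (a * x) else none) := by
  have hS : IsInverseSemigroupInv inv := ⟨h1, h2, huniq⟩
  exact ⟨hS.wagnerPreston, hS.wagnerPreston_injective, hS.wagnerPreston_mul,
    hS.wagnerPreston_apply⟩
end

section
/- Let S be an inverse semigroup with zero whose semilattice of idempotents is 0-disjunctive. Then S is a Clifford semigroup if and only if S contains no infinitesimals, i.e., no nonzero element a with a·a = 0. -/
/-- Let `S` be an inverse semigroup with zero whose semilattice of idempotents
is `0`-disjunctive.  Then `S` is a Clifford semigroup iff it has no
infinitesimals (nonzero elements `a` with `a·a = 0`). -/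
theorem clifford_iff_no_infinitesimals {S : Type*} [Semigroup S] (inv : S → S)
    (h1 : ∀ a : S, a * inv a * a = a)
    (h2 : ∀ a : S, inv a * a * inv a = inv a)
    (huniq : ∀ a b : S, a * b * a = a → b * a * b = b → b = inv a)
    (z : S) (hz : ∀ s : S, z * s = z ∧ s * z = z)
    (hdisj : ∀ e f : S, e * e = e → f * f = f → f ≠ z → f = f * e → f ≠ e →
      ∃ g : S, g * g = g ∧ g ≠ z ∧ g = g * e ∧ f * g = z) :
    (∀ e s : S, e * e = e → e * s = s * e) ↔ ¬ ∃ a : S, a ≠ z ∧ a * a = z := by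
  have EXT : ∀ {p q r : S}, p * q = r → ∀ X : S, p * (q * X) = r * X := by
    intro p q r h X
    rw [← mul_assoc, h]
  have hzz : ∀ s : S, z * s = z := fun s => (hz s).1
  have hsz : ∀ s : S, s * z = z := fun s => (hz s).2
  have hidem_inv : ∀ e : S, e * e = e → inv e = e := fun e he =>
    (huniq e e (by rw [he, he]) (by rw [he, he])).symm
  have hinvz : inv z = z := hidem_inv z (hzz z)
  have hinvinv : ∀ a : S, inv (inv a) = a := fun a => (huniq (inv a) a (h2 a) (h1 a)).symm
  have N1 : ∀ a X : S, a * (inv a * (a * X)) = a * X := fun a X => by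
    have := EXT (h1 a) X; simpa only [mul_assoc] using this
  have N2 : ∀ a X : S, inv a * (a * (inv a * X)) = inv a * X := fun a X => by
    have := EXT (h2 a) X; simpa only [mul_assoc] using this
  have n1 : ∀ a : S, a * (inv a * a) = a := fun a => by
    simpa only [mul_assoc] using h1 a
  have n2 : ∀ a : S, inv a * (a * inv a) = inv a := fun a => by
    simpa only [mul_assoc] using h2 a
  have hei : ∀ a : S, (a * inv a) * (a * inv a) = a * inv a := fun a => by
    have := congrArg (· * inv a) (h1 a); simpa only [mul_assoc] using this
  have hfi : ∀ a : S, (inv a * a) * (inv a * a) = inv a * a := fun a => by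
    have := congrArg (· * a) (h2 a); simpa only [mul_assoc] using this
  -- products of idempotents are idempotent
  have idem_mul : ∀ e f : S, e * e = e → f * f = f → e * f * (e * f) = e * f := by
    intro e f he hf
    have h1ef := h1 (e * f)
    have h2ef := h2 (e * f)
    simp only [mul_assoc] at h1ef h2ef
    have h2ef' : ∀ X : S, inv (e * f) * (e * (f * (inv (e * f) * X))) = inv (e * f) * X := by
      intro X
      have := EXT h2ef X
      simpa only [mul_assoc] using this
    have hA : (e * f) * (f * (inv (e * f) * e)) * (e * f) = e * f := by
      simp only [mul_assoc]
      rw [EXT hf, EXT he]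
      exact h1ef
    have hB : (f * (inv (e * f) * e)) * (e * f) * (f * (inv (e * f) * e))
        = f * (inv (e * f) * e) := by
      simp only [mul_assoc]
      rw [EXT he, EXT hf, h2ef']
    have hy : f * (inv (e * f) * e) = inv (e * f) := huniq (e * f) _ hA hB
    have hxx : inv (e * f) * inv (e * f) = inv (e * f) := by
      conv_lhs => rw [← hy]
      simp only [mul_assoc]
      rw [h2ef']
      exact hy
    have hef_inv : e * f = inv (inv (e * f)) := huniq (inv (e * f)) (e * f) (h2 (e * f)) (h1 (e * f))
    have heq : e * f = inv (e * f) := hef_inv.trans (hidem_inv (inv (e * f)) hxx)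
    have h' := hxx
    rw [← heq] at h'
    exact h'
  -- idempotents commute
  have hcomm : ∀ e f : S, e * e = e → f * f = f → e * f = f * e := by
    intro e f he hf
    have hef := idem_mul e f he hf
    have hfe := idem_mul f e hf he
    have hA : (e * f) * (f * e) * (e * f) = e * f := by
      simp only [mul_assoc]
      rw [EXT hf, EXT he]
      simpa only [mul_assoc] using hef
    have hB : (f * e) * (e * f) * (f * e) = f * e := by
      simp only [mul_assoc]
      rw [EXT he, EXT hf]
      simpa only [mul_assoc] using hfe
    have h := huniq (e * f) (f * e) hA hB
    rw [h, hidem_inv (e * f) hef]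
  -- anti-multiplicativity of inv
  have hanti : ∀ a b : S, inv (a * b) = inv b * inv a := by
    intro a b
    have cpq : (b * inv b) * (inv a * a) = (inv a * a) * (b * inv b) :=
      hcomm _ _ (hei b) (hfi a)
    have cpq' : ∀ X : S, b * (inv b * (inv a * (a * X))) = inv a * (a * (b * (inv b * X))) := by
      intro X
      have := EXT cpq X
      simpa only [mul_assoc] using this
    have hA : (a * b) * (inv b * inv a) * (a * b) = a * b := by
      simp only [mul_assoc]
      rw [cpq' b, N1, n1 b]
    have hB : (inv b * inv a) * (a * b) * (inv b * inv a) = inv b * inv a := by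
      simp only [mul_assoc]
      rw [← cpq' (inv a), N2, n2 a]
    exact (huniq (a * b) (inv b * inv a) hA hB).symm
  constructor
  · rintro hcl ⟨a, haz, haa⟩
    apply haz
    calc a = a * (inv a * a) := (n1 a).symm
      _ = (inv a * a) * a := (hcl (inv a * a) a (hfi a)).symm
      _ = inv a * (a * a) := mul_assoc _ _ _
      _ = inv a * z := by rw [haa]
      _ = z := hsz _
  · intro hni
    -- core case: d := e·f nonzero and ≠ f produces an infinitesimal
    have core : ∀ a : S,
        a * inv a * (inv a * a) ≠ z →
        a * inv a * (inv a * a) ≠ inv a * a → False := by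
      intro a hdz hdf
      have he := hei a
      have hf := hfi a
      have hd : (a * inv a * (inv a * a)) * (a * inv a * (inv a * a))
          = a * inv a * (inv a * a) := idem_mul _ _ he hf
      have hdff : (a * inv a * (inv a * a)) * (inv a * a) = a * inv a * (inv a * a) := by
        simp only [mul_assoc]
        rw [N2]
      obtain ⟨g, hg, hgz, hgf, hdg⟩ :=
        hdisj (inv a * a) (a * inv a * (inv a * a)) hf hd hdz hdff.symm hdf
      have hfe : (inv a * a) * (a * inv a) = (a * inv a) * (inv a * a) := hcomm _ _ hf he
      have hgd : g * (a * inv a * (inv a * a)) = z := by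
        rw [hcomm g _ hg hd, hdg]
      have hge : g * (a * inv a) = z := by
        calc g * (a * inv a) = g * (inv a * a) * (a * inv a) := by rw [← hgf]
          _ = g * ((inv a * a) * (a * inv a)) := mul_assoc _ _ _
          _ = g * ((a * inv a) * (inv a * a)) := by rw [hfe]
          _ = z := hgd
      have hinv_ga : inv (g * a) = inv a * g := by rw [hanti, hidem_inv g hg]
      have hC : g * a * (inv a * g) = z := by
        simp only [mul_assoc]
        rw [← mul_assoc a (inv a) g, hcomm (a * inv a) g he hg, EXT hg]
        exact hge
      have hga : g * a = z := by
        have h := h1 (g * a)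
        rw [hinv_ga, hC, hzz] at h
        exact h.symm
      have hbb : (a * g) * (a * g) = z := by
        simp only [mul_assoc]
        rw [← mul_assoc g a g, hga, hzz, hsz]
      have hbz : a * g ≠ z := by
        intro hb
        apply hgz
        have D : inv (a * g) * (a * g) = g := by
          rw [hanti, hidem_inv g hg]
          simp only [mul_assoc]
          rw [← mul_assoc (inv a) a g, hcomm (inv a * a) g hf hg, EXT hg]
          exact hgf.symm
        rw [hb, hinvz, hzz] at D
        exact D.symm
      exact hni ⟨a * g, hbz, hbb⟩
    -- every element satisfies a·a⁻¹ = a⁻¹·a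
    have hbeta : ∀ a : S, a * inv a = inv a * a := by
      intro a
      by_contra hne
      have hfe : (inv a * a) * (a * inv a) = (a * inv a) * (inv a * a) :=
        hcomm _ _ (hfi a) (hei a)
      by_cases hdz : a * inv a * (inv a * a) = z
      · have haz : a ≠ z := by
          intro h
          apply hne
          rw [h, hinvz, hzz]
        have hfez : (inv a * a) * (a * inv a) = z := by rw [hfe]; exact hdz
        have t3 : inv a * (a * (a * (inv a * a))) = z := by
          have := EXT hfez a
          simp only [mul_assoc] at this
          rw [hzz] at this
          exact this
        have haa : a * a = z := by
          have t1 : (a * (inv a * a)) * ((a * inv a) * a) = a * a := by rw [n1 a, h1 a]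
          rw [← t1]
          simp only [mul_assoc]
          rw [t3, hsz]
        exact hni ⟨a, haz, haa⟩
      · by_cases hdf : a * inv a * (inv a * a) = inv a * a
        · apply core (inv a)
          · rw [hinvinv a, hfe]
            exact hdz
          · rw [hinvinv a, hfe, hdf]
            exact fun hh => hne hh.symm
        · exact core a hdz hdf
    -- centrality of idempotents
    intro e s he
    have hcef : e * (inv s * s) = (inv s * s) * e := hcomm e _ he (hfi s)
    have hinv_se : inv (s * e) = e * inv s := by rw [hanti, hidem_inv e he]
    have st1 : s * (e * inv s) = e * (inv s * (s * e)) := by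
      have hb := hbeta (s * e)
      rw [hinv_se] at hb
      simp only [mul_assoc] at hb
      rw [EXT he] at hb
      exact hb
    have st2 : s * (e * inv s) = e * (inv s * s) := by
      rw [st1, ← mul_assoc (inv s) s e, ← hcef, EXT he]
    have final : s * e = e * s := by
      calc s * e = s * (inv s * s) * e := by rw [n1 s]
        _ = s * ((inv s * s) * e) := mul_assoc _ _ _
        _ = s * (e * (inv s * s)) := by rw [← hcef]
        _ = s * (e * inv s) * s := by simp only [mul_assoc]
        _ = e * (inv s * s) * s := by rw [st2]
        _ = e * ((inv s * s) * s) := mul_assoc _ _ _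
        _ = e * ((s * inv s) * s) := by rw [← hbeta s]
        _ = e * s := by rw [h1 s]
    exact final.symm
end

section
/- Let S be an inverse semigroup. The compatibility relation ∼ is transitive if and only if S is E-unitary. -/
namespace CompatAux

variable {S : Type*} [Semigroup S]

theorem invinv (inv : S → S)
    (h1 : ∀ a : S, a * inv a * a = a)
    (h2 : ∀ a : S, inv a * a * inv a = inv a)
    (huniq : ∀ a b : S, a * b * a = a → b * a * b = b → b = inv a)
    (a : S) : inv (inv a) = a :=
  (huniq (inv a) a (h2 a) (h1 a)).symm

theorem inv_of_idem (inv : S → S)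
    (huniq : ∀ a b : S, a * b * a = a → b * a * b = b → b = inv a)
    (e : S) (he : e * e = e) : inv e = e :=
  (huniq e e (by rw [he, he]) (by rw [he, he])).symm

theorem idemL (inv : S → S) (h1 : ∀ a : S, a * inv a * a = a) (a : S) :
    (inv a * a) * (inv a * a) = inv a * a := by
  rw [mul_assoc, ← mul_assoc a, h1]

theorem idemR (inv : S → S) (h2 : ∀ a : S, inv a * a * inv a = inv a) (a : S) :
    (a * inv a) * (a * inv a) = a * inv a := by
  rw [mul_assoc, ← mul_assoc (inv a), h2]

/-- product of idempotents is idempotent -/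
theorem prod_idem (inv : S → S)
    (h1 : ∀ a : S, a * inv a * a = a)
    (h2 : ∀ a : S, inv a * a * inv a = inv a)
    (huniq : ∀ a b : S, a * b * a = a → b * a * b = b → b = inv a)
    (e f : S) (he : e * e = e) (hf : f * f = f) :
    (e * f) * (e * f) = e * f := by
  have he' : ∀ X : S, e * (e * X) = e * X := fun X => by rw [← mul_assoc, he]
  have hf' : ∀ X : S, f * (f * X) = f * X := fun X => by rw [← mul_assoc, hf]
  set x := inv (e * f) with hx
  have s1 : (e * f) * (f * (x * e)) * (e * f) = e * f := by
    have key : (e * f) * x * (e * f) = e * f := h1 (e * f)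
    simp only [mul_assoc] at key ⊢
    rw [hf', he', key]
  have s2 : (f * (x * e)) * (e * f) * (f * (x * e)) = f * (x * e) := by
    have key : x * (e * f) * x = x := h2 (e * f)
    have keyn : ∀ X : S, x * (e * (f * (x * X))) = x * X := fun X => by
      simp only [← mul_assoc]
      simp only [← mul_assoc] at key
      rw [key]
    simp only [mul_assoc]
    rw [he', hf', keyn]
  have hfxe : f * (x * e) = x := huniq (e * f) (f * (x * e)) s1 s2
  -- x is idempotent
  have hxidem : x * x = x := by
    have key : x * (e * f) * x = x := h2 (e * f)
    have keyn : ∀ X : S, x * (e * (f * (x * X))) = x * X := fun X => by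
      simp only [← mul_assoc]
      simp only [← mul_assoc] at key
      rw [key]
    calc x * x = (f * (x * e)) * (f * (x * e)) := by rw [hfxe]
      _ = f * (x * (e * (f * (x * e)))) := by simp only [mul_assoc]
      _ = f * (x * e) := by rw [keyn]
      _ = x := hfxe
  have : inv x = x := inv_of_idem inv huniq x hxidem
  have hxef : e * f = x := by
    rw [← this, hx, invinv inv h1 h2 huniq]
  rw [← hxef] at hxidem
  exact hxidem

/-- idempotents commute -/
theorem idem_comm (inv : S → S)
    (h1 : ∀ a : S, a * inv a * a = a)
    (h2 : ∀ a : S, inv a * a * inv a = inv a)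
    (huniq : ∀ a b : S, a * b * a = a → b * a * b = b → b = inv a)
    (e f : S) (he : e * e = e) (hf : f * f = f) :
    e * f = f * e := by
  have hef := prod_idem inv h1 h2 huniq e f he hf
  have hfe := prod_idem inv h1 h2 huniq f e hf he
  have he' : ∀ X : S, e * (e * X) = e * X := fun X => by rw [← mul_assoc, he]
  have hf' : ∀ X : S, f * (f * X) = f * X := fun X => by rw [← mul_assoc, hf]
  have p : (e * f) * (f * e) * (e * f) = e * f := by
    simp only [mul_assoc]
    rw [hf', he']
    simp only [mul_assoc] at hef
    exact hef
  have q : (f * e) * (e * f) * (f * e) = f * e := by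
    simp only [mul_assoc]
    rw [he', hf']
    simp only [mul_assoc] at hfe
    exact hfe
  have h3 : f * e = inv (e * f) := huniq (e * f) (f * e) p q
  have h4 : inv (e * f) = e * f := inv_of_idem inv huniq (e * f) hef
  rw [h3, h4]

/-- inverse of a product -/
theorem inv_mul (inv : S → S)
    (h1 : ∀ a : S, a * inv a * a = a)
    (h2 : ∀ a : S, inv a * a * inv a = inv a)
    (huniq : ∀ a b : S, a * b * a = a → b * a * b = b → b = inv a)
    (a b : S) : inv (a * b) = inv b * inv a := by
  have hc := idem_comm inv h1 h2 huniq (b * inv b) (inv a * a)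
    (idemR inv h2 b) (idemL inv h1 a)
  have hcn : ∀ X : S, b * (inv b * (inv a * (a * X)))
      = inv a * (a * (b * (inv b * X))) := fun X => by
    simp only [← mul_assoc]
    simp only [← mul_assoc] at hc
    rw [hc]
  have h1n : ∀ c X : S, c * (inv c * (c * X)) = c * X := fun c X => by
    simp only [← mul_assoc]; rw [h1]
  have h2n : ∀ c X : S, inv c * (c * (inv c * X)) = inv c * X := fun c X => by
    simp only [← mul_assoc]; rw [h2]
  have hb : b * (inv b * b) = b := by
    have := h1 b; simp only [mul_assoc] at this; exact this
  have ha : inv a * (a * inv a) = inv a := by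
    have := h2 a; simp only [mul_assoc] at this; exact this
  have p : (a * b) * (inv b * inv a) * (a * b) = a * b := by
    simp only [mul_assoc]
    rw [hcn, h1n, hb]
  have q : (inv b * inv a) * (a * b) * (inv b * inv a) = inv b * inv a := by
    simp only [mul_assoc]
    rw [← hcn, h2n, ha]
  exact (huniq (a * b) (inv b * inv a) p q).symm

/-- if x = y * f with f idempotent then x = y * (x⁻¹ x) -/
theorem le_lem (inv : S → S)
    (h1 : ∀ a : S, a * inv a * a = a)
    (h2 : ∀ a : S, inv a * a * inv a = inv a)
    (huniq : ∀ a b : S, a * b * a = a → b * a * b = b → b = inv a)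
    (x y f : S) (hf : f * f = f) (hxy : x = y * f) : x = y * (inv x * x) := by
  have hinv : inv x = f * inv y := by
    rw [hxy, inv_mul inv h1 h2 huniq, inv_of_idem inv huniq f hf]
  have h1n : ∀ c X : S, c * (inv c * (c * X)) = c * X := fun c X => by
    simp only [← mul_assoc]; rw [h1]
  have hc := idem_comm inv h1 h2 huniq f (inv y * y) hf (idemL inv h1 y)
  have hcn : ∀ X : S, f * (inv y * (y * X)) = inv y * (y * (f * X)) := fun X => by
    simp only [← mul_assoc]
    simp only [← mul_assoc] at hc
    rw [hc]
  rw [hinv]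
  conv_lhs => rw [hxy]
  rw [hxy]
  simp only [mul_assoc]
  rw [hcn, hf, h1n]

end CompatAux

/-- The compatibility relation of an inverse semigroup is transitive iff
the semigroup is E-unitary. -/
theorem compat_transitive_iff_eUnitary {S : Type*} [Semigroup S] (inv : S → S)
    (h1 : ∀ a : S, a * inv a * a = a)
    (h2 : ∀ a : S, inv a * a * inv a = inv a)
    (huniq : ∀ a b : S, a * b * a = a → b * a * b = b → b = inv a) :
    (∀ s t u : S,
      ((inv s * t) * (inv s * t) = inv s * t ∧ (s * inv t) * (s * inv t) = s * inv t) →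
      ((inv t * u) * (inv t * u) = inv t * u ∧ (t * inv u) * (t * inv u) = t * inv u) →
      ((inv s * u) * (inv s * u) = inv s * u ∧ (s * inv u) * (s * inv u) = s * inv u)) ↔
    (∀ e s : S, e * e = e → e = s * (inv e * e) → s * s = s) := by
  constructor
  · intro hEU e s he hse
    have hie : inv e = e := CompatAux.inv_of_idem inv huniq e he
    rw [hie, he] at hse
    have hse' : s * e = e := hse.symm
    have c1 : (inv s * e) * (inv s * e) = inv s * e := by
      have h : inv s * e = (inv s * s) * e := by rw [mul_assoc, hse']
      rw [h]
      exact CompatAux.prod_idem inv h1 h2 huniq _ _ (CompatAux.idemL inv h1 s) he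
    have c2 : (s * inv e) * (s * inv e) = s * inv e := by
      rw [hie, hse']; exact he
    have c3 : (inv e * (inv s * s)) * (inv e * (inv s * s)) = inv e * (inv s * s) := by
      rw [hie]
      exact CompatAux.prod_idem inv h1 h2 huniq _ _ he (CompatAux.idemL inv h1 s)
    have c4 : (e * inv (inv s * s)) * (e * inv (inv s * s)) = e * inv (inv s * s) := by
      rw [CompatAux.inv_of_idem inv huniq _ (CompatAux.idemL inv h1 s)]
      exact CompatAux.prod_idem inv h1 h2 huniq _ _ he (CompatAux.idemL inv h1 s)
    obtain ⟨-, hcon⟩ := hEU s e (inv s * s) ⟨c1, c2⟩ ⟨c3, c4⟩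
    rw [CompatAux.inv_of_idem inv huniq _ (CompatAux.idemL inv h1 s)] at hcon
    have hs : s * (inv s * s) = s := by rw [← mul_assoc, h1]
    rw [hs] at hcon
    exact hcon
  · intro hEU s t u hst htu
    obtain ⟨c1, c2⟩ := hst
    obtain ⟨c3, c4⟩ := htu
    have h2n : ∀ c X : S, inv c * (c * (inv c * X)) = inv c * X := fun c X => by
      simp only [← mul_assoc]; rw [h2]
    have hu1 : u * (inv u * u) = u := by
      have := h1 u; simp only [mul_assoc] at this; exact this
    have hu2 : inv u * (u * inv u) = inv u := by
      have := h2 u; simp only [mul_assoc] at this; exact this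
    constructor
    · -- first component: inv s * u idempotent
      have hc := CompatAux.idem_comm inv h1 h2 huniq (u * inv u) (t * inv t)
        (CompatAux.idemR inv h2 u) (CompatAux.idemR inv h2 t)
      have hcn : ∀ X : S, u * (inv u * (t * (inv t * X)))
          = t * (inv t * (u * (inv u * X))) := fun X => by
        simp only [← mul_assoc]
        simp only [← mul_assoc] at hc
        rw [hc]
      have he1 := CompatAux.prod_idem inv h1 h2 huniq _ _ c1 c3
      have hf1 : (inv u * (t * (inv t * u))) * (inv u * (t * (inv t * u)))
          = inv u * (t * (inv t * u)) := by
        simp only [mul_assoc]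
        rw [hcn, h2n, hu1]
      have heq1 : (inv s * t) * (inv t * u) = (inv s * u) * (inv u * (t * (inv t * u))) := by
        simp only [mul_assoc]
        rw [hcn, hu1]
      have hle1 := CompatAux.le_lem inv h1 h2 huniq _ _ _ hf1 heq1
      exact hEU _ _ he1 hle1
    · -- second component: s * inv u idempotent
      have hc := CompatAux.idem_comm inv h1 h2 huniq (inv u * u) (inv t * t)
        (CompatAux.idemL inv h1 u) (CompatAux.idemL inv h1 t)
      have hcn : ∀ X : S, inv u * (u * (inv t * (t * X)))
          = inv t * (t * (inv u * (u * X))) := fun X => by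
        simp only [← mul_assoc]
        simp only [← mul_assoc] at hc
        rw [hc]
      have he2 := CompatAux.prod_idem inv h1 h2 huniq _ _ c2 c4
      have hf2 : (u * (inv t * (t * inv u))) * (u * (inv t * (t * inv u)))
          = u * (inv t * (t * inv u)) := by
        simp only [mul_assoc]
        rw [hcn, h2n, hu2]
      have heq2 : (s * inv t) * (t * inv u) = (s * inv u) * (u * (inv t * (t * inv u))) := by
        simp only [mul_assoc]
        rw [hcn, hu2]
      have hle2 := CompatAux.le_lem inv h1 h2 huniq _ _ _ hf2 heq2
      exact hEU _ _ he2 hle2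
end

section
/- Let S be an inverse semigroup. Every pair of elements of S has a greatest lower bound with respect to the natural partial order if and only if for each a ∈ S there exists an idempotent φ(a) with φ(a) ≤ a such that every idempotent e with e ≤ a satisfies e ≤ φ(a) (i.e., each element has a largest idempotent below it). -/
/-- An inverse semigroup has all binary meets (w.r.t. the natural partial
order) iff every element has a largest idempotent below it. -/
theorem meets_iff_fixed_point_operator {S : Type*} [Semigroup S] (inv : S → S)
    (h1 : ∀ a : S, a * inv a * a = a)
    (h2 : ∀ a : S, inv a * a * inv a = inv a)
    (huniq : ∀ a b : S, a * b * a = a → b * a * b = b → b = inv a) :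
    (∀ a b : S, ∃ m : S,
        m = a * (inv m * m) ∧ m = b * (inv m * m) ∧
        ∀ u : S, u = a * (inv u * u) → u = b * (inv u * u) → u = m * (inv u * u)) ↔
    (∀ a : S, ∃ p : S, p * p = p ∧ p = a * (inv p * p) ∧
        ∀ e : S, e * e = e → e = a * (inv e * e) → e = p * (inv e * e)) := by
  -- basic helpers
  have A1 : ∀ a : S, a * (inv a * a) = a := fun a => by rw [← mul_assoc]; exact h1 a
  have A2c : ∀ a c : S, inv a * (a * (inv a * c)) = inv a * c := fun a c => by
    rw [← mul_assoc, ← mul_assoc, h2 a]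
  have invinv : ∀ a : S, inv (inv a) = a := fun a => (huniq (inv a) a (h2 a) (h1 a)).symm
  have inv_idem : ∀ e : S, e * e = e → inv e = e := fun e he =>
    (huniq e e (by rw [he, he]) (by rw [he, he])).symm
  have idem_l : ∀ a : S, (a * inv a) * (a * inv a) = a * inv a := by
    intro a
    calc (a * inv a) * (a * inv a) = (a * inv a * a) * inv a := by simp only [mul_assoc]
      _ = a * inv a := by rw [h1]
  have idem_r : ∀ a : S, (inv a * a) * (inv a * a) = inv a * a := by
    intro a
    calc (inv a * a) * (inv a * a) = (inv a * a * inv a) * a := by simp only [mul_assoc]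
      _ = inv a * a := by rw [h2]
  -- products of idempotents are idempotent
  have prod_idem : ∀ e f : S, e * e = e → f * f = f → (e * f) * (e * f) = e * f := by
    intro e f he hf
    have hx1 : (e * f) * (f * (inv (e * f) * e)) * (e * f) = e * f := by
      calc (e * f) * (f * (inv (e * f) * e)) * (e * f)
          = (e * (f * f)) * (inv (e * f) * ((e * e) * f)) := by simp only [mul_assoc]
        _ = (e * f) * (inv (e * f) * (e * f)) := by rw [he, hf]
        _ = e * f := by rw [← mul_assoc]; exact h1 _
    have hx2 : (f * (inv (e * f) * e)) * (e * f) * (f * (inv (e * f) * e))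
        = f * (inv (e * f) * e) := by
      calc (f * (inv (e * f) * e)) * (e * f) * (f * (inv (e * f) * e))
          = f * (inv (e * f) * ((e * e) * ((f * f) * (inv (e * f) * e)))) := by
            simp only [mul_assoc]
        _ = f * (inv (e * f) * ((e * f) * (inv (e * f) * e))) := by
            rw [he, hf]; simp only [mul_assoc]
        _ = f * (inv (e * f) * e) := by rw [A2c]
    have hfe := huniq (e * f) (f * (inv (e * f) * e)) hx1 hx2
    have hxx : inv (e * f) * inv (e * f) = inv (e * f) := by
      calc inv (e * f) * inv (e * f)
          = (f * (inv (e * f) * e)) * (f * (inv (e * f) * e)) := by rw [hfe]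
        _ = f * (inv (e * f) * ((e * f) * (inv (e * f) * e))) := by simp only [mul_assoc]
        _ = f * (inv (e * f) * e) := by rw [A2c]
        _ = inv (e * f) := hfe
    have hef : e * f = inv (e * f) := by
      conv_lhs => rw [← invinv (e * f)]
      exact inv_idem _ hxx
    rw [hef]; exact hxx
  -- idempotents commute
  have comm : ∀ e f : S, e * e = e → f * f = f → e * f = f * e := by
    intro e f he hf
    have hef := prod_idem e f he hf
    have hfe := prod_idem f e hf he
    have k1 : (e * f) * (f * e) * (e * f) = e * f := by
      calc (e * f) * (f * e) * (e * f) = (e * (f * f)) * ((e * e) * f) := by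
            simp only [mul_assoc]
        _ = (e * f) * (e * f) := by rw [he, hf]
        _ = e * f := hef
    have k2 : (f * e) * (e * f) * (f * e) = f * e := by
      calc (f * e) * (e * f) * (f * e) = (f * (e * e)) * ((f * f) * e) := by
            simp only [mul_assoc]
        _ = (f * e) * (f * e) := by rw [he, hf]
        _ = f * e := hfe
    have := huniq (e * f) (f * e) k1 k2
    rw [this, inv_idem _ hef]
  -- inv is an anti-homomorphism
  have inv_mul : ∀ a b : S, inv (a * b) = inv b * inv a := by
    intro a b
    have c1 : (a * b) * (inv b * inv a) * (a * b) = a * b := by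
      calc (a * b) * (inv b * inv a) * (a * b)
          = a * ((b * inv b) * ((inv a * a) * b)) := by simp only [mul_assoc]
        _ = a * (((b * inv b) * (inv a * a)) * b) := by simp only [mul_assoc]
        _ = a * (((inv a * a) * (b * inv b)) * b) := by
            rw [comm (b * inv b) (inv a * a) (idem_l b) (idem_r a)]
        _ = (a * inv a * a) * (b * inv b * b) := by simp only [mul_assoc]
        _ = a * b := by rw [h1, h1]
    have c2 : (inv b * inv a) * (a * b) * (inv b * inv a) = inv b * inv a := by
      calc (inv b * inv a) * (a * b) * (inv b * inv a)
          = inv b * ((inv a * a) * ((b * inv b) * inv a)) := by simp only [mul_assoc]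
        _ = inv b * (((inv a * a) * (b * inv b)) * inv a) := by simp only [mul_assoc]
        _ = inv b * (((b * inv b) * (inv a * a)) * inv a) := by
            rw [comm (inv a * a) (b * inv b) (idem_r a) (idem_l b)]
        _ = (inv b * b * inv b) * (inv a * a * inv a) := by simp only [mul_assoc]
        _ = inv b * inv a := by rw [h2, h2]
    exact (huniq (a * b) (inv b * inv a) c1 c2).symm
  -- if s = e*t with e idempotent then s ≤ t
  have eform_le : ∀ s t e : S, e * e = e → s = e * t → s = t * (inv s * s) := by
    intro s t e he hs
    have hinv : inv s = inv t * e := by rw [hs, inv_mul, inv_idem e he]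
    have key : t * (inv s * s) = e * t := by
      calc t * (inv s * s) = t * (inv t * ((e * e) * t)) := by
            rw [hinv, hs]; simp only [mul_assoc]
        _ = ((t * inv t) * e) * t := by rw [he]; simp only [mul_assoc]
        _ = (e * (t * inv t)) * t := by rw [comm (t * inv t) e (idem_l t) he]
        _ = e * (t * inv t * t) := by simp only [mul_assoc]
        _ = e * t := by rw [h1]
    rw [key]; exact hs
  -- if s = t*f with f idempotent then s ≤ t
  have tform_le : ∀ s t f : S, f * f = f → s = t * f → s = t * (inv s * s) := by
    intro s t f hf hs
    have hinv : inv s = f * inv t := by rw [hs, inv_mul, inv_idem f hf]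
    have key : t * (inv s * s) = s := by
      calc t * (inv s * s) = t * ((f * (inv t * t)) * f) := by
            rw [hinv, hs]; simp only [mul_assoc]
        _ = t * (((inv t * t) * f) * f) := by
            rw [comm f (inv t * t) hf (idem_r t)]
        _ = (t * (inv t * t)) * (f * f) := by simp only [mul_assoc]
        _ = t * f := by rw [A1, hf]
        _ = s := hs.symm
    exact key.symm
  -- t*f (f idempotent) is below t also in the e-form
  have eform_of_tform : ∀ t f : S, f * f = f → t * f = ((t * f) * inv (t * f)) * t := by
    intro t f hf
    have hinv : inv (t * f) = f * inv t := by rw [inv_mul, inv_idem f hf]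
    have key : ((t * f) * inv (t * f)) * t = t * f := by
      calc ((t * f) * inv (t * f)) * t = ((t * f) * (f * inv t)) * t := by rw [hinv]
        _ = t * ((f * f) * (inv t * t)) := by simp only [mul_assoc]
        _ = t * (f * (inv t * t)) := by rw [hf]
        _ = t * ((inv t * t) * f) := by rw [comm f (inv t * t) hf (idem_r t)]
        _ = (t * (inv t * t)) * f := by simp only [mul_assoc]
        _ = t * f := by rw [A1]
    exact key.symm
  have le_eform : ∀ s t : S, s = t * (inv s * s) → s = (s * inv s) * t := by
    intro s t hs
    have h := eform_of_tform t (inv s * s) (idem_r s)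
    rw [← hs] at h
    exact h
  have le_of_ef : ∀ x w e f : S, e * e = e → f * f = f →
      x = e * (w * f) → x = w * (inv x * x) := by
    intro x w e f he hf hx
    have k1 := eform_le x (w * f) e he hx
    have k2 : x = w * (f * (inv x * x)) := k1.trans (mul_assoc w f (inv x * x))
    exact tform_le x w (f * (inv x * x)) (prod_idem f (inv x * x) hf (idem_r x)) k2
  -- multiplication is compatible with the order
  have le_mul : ∀ s t u v : S, s = t * (inv s * s) → u = v * (inv u * u) →
      s * u = (t * v) * (inv (s * u) * (s * u)) := by
    intro s t u v hs hu
    have hs' := le_eform s t hs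
    have k1 : s * u = ((s * inv s) * t) * (v * (inv u * u)) := by rw [← hs', ← hu]
    have k2 : s * u = (s * inv s) * ((t * v) * (inv u * u)) :=
      k1.trans (by simp only [mul_assoc])
    exact le_of_ef (s * u) (t * v) (s * inv s) (inv u * u) (idem_l s) (idem_r u) k2
  -- inv is monotone
  have inv_mono : ∀ s t : S, s = t * (inv s * s) →
      inv s = inv t * (inv (inv s) * inv s) := by
    intro s t hs
    have hinv : inv s = (inv s * s) * inv t := by
      conv_lhs => rw [hs]
      rw [inv_mul, inv_idem _ (idem_r s)]
    exact eform_le (inv s) (inv t) (inv s * s) (idem_r s) hinv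
  -- anything below an idempotent is idempotent
  have idem_of_le_idem : ∀ x f : S, f * f = f → x = f * (inv x * x) → x * x = x := by
    intro x f hf hx
    have h := prod_idem f (inv x * x) hf (idem_r x)
    rw [← hx] at h
    exact h
  -- conjugation preserves idempotents
  have conj_idem : ∀ b g : S, g * g = g →
      (inv b * (g * b)) * (inv b * (g * b)) = inv b * (g * b) := by
    intro b g hg
    calc (inv b * (g * b)) * (inv b * (g * b))
        = inv b * ((g * (b * inv b)) * (g * b)) := by simp only [mul_assoc]
      _ = inv b * (((b * inv b) * g) * (g * b)) := by
          rw [comm g (b * inv b) hg (idem_l b)]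
      _ = inv b * (b * (inv b * ((g * g) * b))) := by simp only [mul_assoc]
      _ = inv b * (b * (inv b * (g * b))) := by rw [hg]
      _ = inv b * (g * b) := A2c b (g * b)
  constructor
  · -- meets imply largest idempotents
    intro hm a
    obtain ⟨m, hma, hmf, hmax⟩ := hm a (a * inv a)
    refine ⟨m, idem_of_le_idem m (a * inv a) (idem_l a) hmf, hma, ?_⟩
    intro e hee hea
    have h1e := inv_mono e a hea
    have key := le_mul e a (inv e) (inv a) hea h1e
    have he' : e * inv e = e := by rw [inv_idem e hee, hee]
    rw [he'] at key
    exact hmax e hea key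
  · -- largest idempotents imply meets
    intro hφ a b
    obtain ⟨p, hpp, hple, hpmax⟩ := hφ (a * inv b)
    refine ⟨p * b, ?_, eform_le (p * b) b p hpp rfl, ?_⟩
    · have k1 : p * b = a * (inv b * ((inv p * p) * b)) := by
        rw [show p * b = ((a * inv b) * (inv p * p)) * b from by rw [← hple]]
        simp only [mul_assoc]
      exact tform_le (p * b) a (inv b * ((inv p * p) * b))
        (conj_idem b (inv p * p) (idem_r p)) k1
    · intro u hua hub
      have hub' := inv_mono u b hub
      have s1 := le_mul u a (inv u) (inv b) hua hub'
      have s2 := hpmax (u * inv u) (idem_l u) s1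
      have s3 := le_mul (u * inv u) p u b s2 hub
      rw [h1 u] at s3
      exact s3
end

section
/- Let S be an E*-unitary inverse semigroup with zero. Then every pair of elements s, t ∈ S has a greatest lower bound s ∧ t with respect to the natural partial order. -/
section aux
variable {S : Type*} [Semigroup S]

theorem aux_inv_inv (inv : S → S)
    (h1 : ∀ a : S, a * inv a * a = a)
    (h2 : ∀ a : S, inv a * a * inv a = inv a)
    (huniq : ∀ a b : S, a * b * a = a → b * a * b = b → b = inv a)
    (a : S) : inv (inv a) = a :=
  (huniq (inv a) a (h2 a) (h1 a)).symm

theorem aux_idem_ii (inv : S → S) (h1 : ∀ a : S, a * inv a * a = a) (a : S) :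
    (inv a * a) * (inv a * a) = inv a * a := by
  calc (inv a * a) * (inv a * a) = inv a * (a * inv a * a) := by simp only [mul_assoc]
    _ = inv a * a := by rw [h1]

theorem aux_idem_i2 (inv : S → S) (h1 : ∀ a : S, a * inv a * a = a) (a : S) :
    (a * inv a) * (a * inv a) = a * inv a := by
  calc (a * inv a) * (a * inv a) = (a * inv a * a) * inv a := by simp only [mul_assoc]
    _ = a * inv a := by rw [h1]

theorem aux_idem_inv (inv : S → S)
    (huniq : ∀ a b : S, a * b * a = a → b * a * b = b → b = inv a)
    (e : S) (he : e * e = e) : inv e = e := by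
  have h3 : e * e * e = e := by rw [he, he]
  exact (huniq e e h3 h3).symm

theorem aux_idem_mul (inv : S → S)
    (h1 : ∀ a : S, a * inv a * a = a)
    (h2 : ∀ a : S, inv a * a * inv a = inv a)
    (huniq : ∀ a b : S, a * b * a = a → b * a * b = b → b = inv a)
    (e f : S) (he : e * e = e) (hf : f * f = f) :
    (e * f) * (e * f) = e * f := by
  have hx1 : (e * f) * (f * inv (e * f) * e) * (e * f) = e * f := by
    calc (e * f) * (f * inv (e * f) * e) * (e * f)
        = e * (f * f) * inv (e * f) * (e * e) * f := by simp only [mul_assoc]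
      _ = e * f * inv (e * f) * e * f := by rw [he, hf]
      _ = (e * f) * inv (e * f) * (e * f) := by simp only [mul_assoc]
      _ = e * f := h1 (e * f)
  have hx2 : (f * inv (e * f) * e) * (e * f) * (f * inv (e * f) * e)
      = f * inv (e * f) * e := by
    calc (f * inv (e * f) * e) * (e * f) * (f * inv (e * f) * e)
        = f * (inv (e * f) * (e * e) * ((f * f) * inv (e * f))) * e := by
          simp only [mul_assoc]
      _ = f * (inv (e * f) * e * (f * inv (e * f))) * e := by rw [he, hf]
      _ = f * (inv (e * f) * (e * f) * inv (e * f)) * e := by simp only [mul_assoc]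
      _ = f * inv (e * f) * e := by rw [h2 (e * f)]
  have hx : f * inv (e * f) * e = inv (e * f) := huniq (e * f) _ hx1 hx2
  have hxx : inv (e * f) * inv (e * f) = inv (e * f) := by
    calc inv (e * f) * inv (e * f)
        = (f * inv (e * f) * e) * (f * inv (e * f) * e) := by rw [hx]
      _ = f * (inv (e * f) * (e * f) * inv (e * f)) * e := by simp only [mul_assoc]
      _ = f * inv (e * f) * e := by rw [h2 (e * f)]
      _ = inv (e * f) := hx
  have hef : e * f = inv (e * f) := by
    have h4 := aux_idem_inv inv huniq (inv (e * f)) hxx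
    rw [aux_inv_inv inv h1 h2 huniq (e * f)] at h4
    exact h4
  rw [hef]
  exact hxx

theorem aux_comm (inv : S → S)
    (h1 : ∀ a : S, a * inv a * a = a)
    (h2 : ∀ a : S, inv a * a * inv a = inv a)
    (huniq : ∀ a b : S, a * b * a = a → b * a * b = b → b = inv a)
    (e f : S) (he : e * e = e) (hf : f * f = f) :
    e * f = f * e := by
  have hef := aux_idem_mul inv h1 h2 huniq e f he hf
  have hfe := aux_idem_mul inv h1 h2 huniq f e hf he
  have c1 : (e * f) * (f * e) * (e * f) = e * f := by
    calc (e * f) * (f * e) * (e * f) = e * (f * f) * (e * e) * f := by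
          simp only [mul_assoc]
      _ = e * f * e * f := by rw [he, hf]
      _ = (e * f) * (e * f) := by simp only [mul_assoc]
      _ = e * f := hef
  have c2 : (f * e) * (e * f) * (f * e) = f * e := by
    calc (f * e) * (e * f) * (f * e) = f * (e * e) * (f * f) * e := by
          simp only [mul_assoc]
      _ = f * e * f * e := by rw [he, hf]
      _ = (f * e) * (f * e) := by simp only [mul_assoc]
      _ = f * e := hfe
  have h4 := huniq (e * f) (f * e) c1 c2
  rw [aux_idem_inv inv huniq (e * f) hef] at h4
  exact h4.symm

theorem aux_inv_mul (inv : S → S)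
    (h1 : ∀ a : S, a * inv a * a = a)
    (h2 : ∀ a : S, inv a * a * inv a = inv a)
    (huniq : ∀ a b : S, a * b * a = a → b * a * b = b → b = inv a)
    (a b : S) : inv (a * b) = inv b * inv a := by
  have c1 : (a * b) * (inv b * inv a) * (a * b) = a * b := by
    calc (a * b) * (inv b * inv a) * (a * b)
        = a * ((b * inv b) * (inv a * a)) * b := by simp only [mul_assoc]
      _ = a * ((inv a * a) * (b * inv b)) * b := by
          rw [aux_comm inv h1 h2 huniq (b * inv b) (inv a * a)
            (aux_idem_i2 inv h1 b) (aux_idem_ii inv h1 a)]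
      _ = (a * inv a * a) * (b * inv b * b) := by simp only [mul_assoc]
      _ = a * b := by rw [h1, h1]
  have c2 : (inv b * inv a) * (a * b) * (inv b * inv a) = inv b * inv a := by
    calc (inv b * inv a) * (a * b) * (inv b * inv a)
        = inv b * ((inv a * a) * (b * inv b)) * inv a := by simp only [mul_assoc]
      _ = inv b * ((b * inv b) * (inv a * a)) * inv a := by
          rw [aux_comm inv h1 h2 huniq (inv a * a) (b * inv b)
            (aux_idem_ii inv h1 a) (aux_idem_i2 inv h1 b)]
      _ = (inv b * b * inv b) * (inv a * a * inv a) := by simp only [mul_assoc]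
      _ = inv b * inv a := by rw [h2, h2]
  exact (huniq (a * b) (inv b * inv a) c1 c2).symm

end aux

/-- An E*-unitary inverse semigroup with zero has all binary meets with
respect to the natural partial order. -/
theorem eStarUnitary_has_meets {S : Type*} [Semigroup S] (inv : S → S)
    (h1 : ∀ a : S, a * inv a * a = a)
    (h2 : ∀ a : S, inv a * a * inv a = inv a)
    (huniq : ∀ a b : S, a * b * a = a → b * a * b = b → b = inv a)
    (z : S) (hz : ∀ s : S, z * s = z ∧ s * z = z)
    (hE : ∀ e s : S, e * e = e → e ≠ z → e = s * (inv e * e) → s * s = s) :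
    ∀ s t : S, ∃ m : S,
      m = s * (inv m * m) ∧ m = t * (inv m * m) ∧
      ∀ u : S, u = s * (inv u * u) → u = t * (inv u * u) → u = m * (inv u * u) := by
  intro s t
  have hzz : z * z = z := (hz z).1
  have hzzz : z * z * z = z := by rw [hzz, hzz]
  have hinvz : inv z = z := (huniq z z hzzz hzzz).symm
  by_cases h : ∀ u : S, u = s * (inv u * u) → u = t * (inv u * u) → u = z
  · refine ⟨z, ?_, ?_, ?_⟩
    · rw [hinvz, hzz, (hz s).2]
    · rw [hinvz, hzz, (hz t).2]
    · intro u huA huB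
      have h0 : u = z := h u huA huB
      rw [h0, hinvz, hzz, hzz]
  · push_neg at h
    obtain ⟨u₀, hu1, hu2, hu0⟩ := h
    -- in case a nonzero lower bound exists, s * inv t is an idempotent
    have hlb : ∀ v : S, v = t * (inv v * v) → v * (inv t * t) = v := by
      intro v hv
      calc v * (inv t * t) = (t * (inv v * v)) * (inv t * t) := by rw [← hv]
        _ = t * ((inv v * v) * (inv t * t)) := by simp only [mul_assoc]
        _ = t * ((inv t * t) * (inv v * v)) := by
            rw [aux_comm inv h1 h2 huniq (inv v * v) (inv t * t)
              (aux_idem_ii inv h1 v) (aux_idem_ii inv h1 t)]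
        _ = (t * inv t * t) * (inv v * v) := by simp only [mul_assoc]
        _ = t * (inv v * v) := by rw [h1]
        _ = v := hv.symm
    have hEidem : (u₀ * inv u₀) * (u₀ * inv u₀) = u₀ * inv u₀ :=
      aux_idem_i2 inv h1 u₀
    have hEinv : inv (u₀ * inv u₀) = u₀ * inv u₀ :=
      aux_idem_inv inv huniq _ hEidem
    have hEnz : u₀ * inv u₀ ≠ z := by
      intro hcon
      apply hu0
      calc u₀ = u₀ * inv u₀ * u₀ := (h1 u₀).symm
        _ = z * u₀ := by rw [hcon]
        _ = z := (hz u₀).1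
    have keyE : (s * inv t) * (u₀ * inv u₀) = u₀ * inv u₀ := by
      calc (s * inv t) * (u₀ * inv u₀)
          = (s * inv t) * ((t * (inv u₀ * u₀)) * inv u₀) := by rw [← hu2]
        _ = s * ((inv t * t) * (inv u₀ * u₀)) * inv u₀ := by simp only [mul_assoc]
        _ = s * ((inv u₀ * u₀) * (inv t * t)) * inv u₀ := by
            rw [aux_comm inv h1 h2 huniq (inv t * t) (inv u₀ * u₀)
              (aux_idem_ii inv h1 t) (aux_idem_ii inv h1 u₀)]
        _ = (s * (inv u₀ * u₀)) * ((inv t * t) * inv u₀) := by simp only [mul_assoc]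
        _ = u₀ * ((inv t * t) * inv u₀) := by rw [← hu1]
        _ = (u₀ * (inv t * t)) * inv u₀ := by simp only [mul_assoc]
        _ = u₀ * inv u₀ := by rw [hlb u₀ hu2]
    have hst : (s * inv t) * (s * inv t) = s * inv t := by
      apply hE (u₀ * inv u₀) (s * inv t) hEidem hEnz
      rw [hEinv, hEidem]
      exact keyE.symm
    have hts : t * inv s = s * inv t := by
      have h4 := aux_inv_mul inv h1 h2 huniq s (inv t)
      rw [aux_inv_inv inv h1 h2 huniq t] at h4
      rw [aux_idem_inv inv huniq (s * inv t) hst] at h4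
      exact h4.symm
    have hinvm : inv (s * (inv t * t)) = (inv t * t) * inv s := by
      have h4 := aux_inv_mul inv h1 h2 huniq s (inv t * t)
      rw [aux_idem_inv inv huniq (inv t * t) (aux_idem_ii inv h1 t)] at h4
      exact h4
    refine ⟨s * (inv t * t), ?_, ?_, ?_⟩
    · symm
      calc s * (inv (s * (inv t * t)) * (s * (inv t * t)))
          = s * (((inv t * t) * inv s) * (s * (inv t * t))) := by rw [hinvm]
        _ = s * (((inv t * t) * (inv s * s)) * (inv t * t)) := by
            simp only [mul_assoc]
        _ = s * (((inv s * s) * (inv t * t)) * (inv t * t)) := by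
            rw [aux_comm inv h1 h2 huniq (inv t * t) (inv s * s)
              (aux_idem_ii inv h1 t) (aux_idem_ii inv h1 s)]
        _ = (s * inv s * s) * ((inv t * t) * (inv t * t)) := by
            simp only [mul_assoc]
        _ = s * (inv t * t) := by rw [h1, aux_idem_ii inv h1 t]
    · symm
      calc t * (inv (s * (inv t * t)) * (s * (inv t * t)))
          = t * (((inv t * t) * inv s) * (s * (inv t * t))) := by rw [hinvm]
        _ = (t * inv t * t) * (inv s * (s * (inv t * t))) := by
            simp only [mul_assoc]
        _ = t * (inv s * (s * (inv t * t))) := by rw [h1]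
        _ = (t * inv s) * (s * (inv t * t)) := by simp only [mul_assoc]
        _ = (s * inv t) * (s * (inv t * t)) := by rw [hts]
        _ = ((s * inv t) * (s * inv t)) * t := by simp only [mul_assoc]
        _ = (s * inv t) * t := by rw [hst]
        _ = s * (inv t * t) := by simp only [mul_assoc]
    · intro u hu1' hu2'
      symm
      calc (s * (inv t * t)) * (inv u * u)
          = s * ((inv t * t) * (inv u * u)) := by simp only [mul_assoc]
        _ = s * ((inv u * u) * (inv t * t)) := by
            rw [aux_comm inv h1 h2 huniq (inv t * t) (inv u * u)
              (aux_idem_ii inv h1 t) (aux_idem_ii inv h1 u)]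
        _ = (s * (inv u * u)) * (inv t * t) := by simp only [mul_assoc]
        _ = u * (inv t * t) := by rw [← hu1']
        _ = u := hlb u hu2'
end

section
/- Let S be an inverse semigroup and define μ by (s,t) ∈ μ iff s·e·s⁻¹ = t·e·t⁻¹ for every idempotent e. Then μ is a congruence on S, μ is idempotent-separating (any two μ-related idempotents are equal), and μ contains every idempotent-separating congruence on S; that is, μ is the largest idempotent-separating congruence on S. -/
/-- The relation `μ`: `(s,t) ∈ μ` iff `s·e·s⁻¹ = t·e·t⁻¹` for all idempotents `e`. -/
def muRel {S : Type*} [Semigroup S] (inv : S → S) (s t : S) : Prop :=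
  ∀ e : S, e * e = e → s * e * inv s = t * e * inv t


section AuxIS

variable {S : Type*} [Semigroup S]

private lemma lift3 {a b r : S} (h : a * b = r) (y : S) :
    a * (b * y) = r * y := by rw [← mul_assoc, h]

private lemma lift4 {a b c r : S} (h : a * b * c = r) (y : S) :
    a * (b * (c * y)) = r * y := by simp only [← mul_assoc]; rw [h]

private lemma lift5 {a b c d r : S} (h : a * b * c * d = r) (y : S) :
    a * (b * (c * (d * y))) = r * y := by simp only [← mul_assoc]; rw [h]

variable (inv : S → S)
variable (h1 : ∀ a : S, a * inv a * a = a)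
variable (h2 : ∀ a : S, inv a * a * inv a = inv a)
variable (huniq : ∀ a b : S, a * b * a = a → b * a * b = b → b = inv a)

include huniq in
private lemma inv_idem {g : S} (hg : g * g = g) : inv g = g := by
  have h3 : g * g * g = g := by rw [hg, hg]
  exact (huniq g g h3 h3).symm

include h1 h2 huniq in
private lemma prod_idem {e f : S} (he : e * e = e) (hf : f * f = f) :
    (e * f) * (e * f) = e * f := by
  set x := inv (e * f) with hx
  have hA : e * f * x * (e * f) = e * f := by rw [← hx] at *; exact h1 (e * f)
  have hB : x * (e * f) * x = x := by rw [← hx] at *; exact h2 (e * f)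
  have hA' : e * (f * (x * (e * f))) = e * f := by simpa only [mul_assoc] using hA
  have hB0 : x * e * f * x = x := by rw [mul_assoc x e f]; exact hB
  have hfxe : f * x * e = inv (e * f) := by
    apply huniq
    · -- (e*f) * (f*x*e) * (e*f) = e*f
      simp only [mul_assoc, lift3 hf, lift3 he, hA']
    · -- (f*x*e) * (e*f) * (f*x*e) = f*x*e
      simp only [mul_assoc, lift3 he, lift3 hf, lift5 hB0]
  rw [← hx] at hfxe
  have hxx : x * x = x := by
    rw [← hfxe]
    simp only [mul_assoc, lift5 hB0]
  have hefx : e * f = x := by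
    have := huniq x (e * f) hB hA
    rw [inv_idem inv huniq hxx] at this
    exact this
  rw [hefx]; exact hxx

include h1 h2 huniq in
private lemma idem_comm {e f : S} (he : e * e = e) (hf : f * f = f) :
    e * f = f * e := by
  have hef : (e * f) * (e * f) = e * f := prod_idem inv h1 h2 huniq he hf
  have hfe : (f * e) * (f * e) = f * e := prod_idem inv h1 h2 huniq hf he
  have hA : (e * f) * (f * e) * (e * f) = e * f := by
    have hef' : e * (f * (e * f)) = e * f := by simpa only [mul_assoc] using hef
    simp only [mul_assoc, lift3 hf, lift3 he, hef']
  have hB : (f * e) * (e * f) * (f * e) = f * e := by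
    have hfe' : f * (e * (f * e)) = f * e := by simpa only [mul_assoc] using hfe
    simp only [mul_assoc, lift3 he, lift3 hf, hfe']
  have := huniq (e * f) (f * e) hA hB
  rw [inv_idem inv huniq hef] at this
  exact this.symm

include h1 in
private lemma ai_idem (a : S) : (a * inv a) * (a * inv a) = a * inv a := by
  simp only [← mul_assoc]; rw [h1]

include h2 in
private lemma ia_idem (a : S) : (inv a * a) * (inv a * a) = inv a * a := by
  simp only [← mul_assoc]; rw [h2]

include h1 h2 huniq in
private lemma inv_mul (a b : S) : inv (a * b) = inv b * inv a := by
  have hcomm : (b * inv b) * (inv a * a) = (inv a * a) * (b * inv b) :=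
    idem_comm inv h1 h2 huniq (ai_idem inv h1 b) (ia_idem inv h2 a)
  have hcomm' : b * inv b * inv a * a = inv a * a * (b * inv b) := by
    simp only [← mul_assoc] at hcomm ⊢; exact hcomm
  have hcomm2' : inv a * a * b * inv b = b * inv b * (inv a * a) := by
    simp only [← mul_assoc] at hcomm ⊢; exact hcomm.symm
  have hb : b * (inv b * b) = b := by simpa only [mul_assoc] using h1 b
  have hia : inv a * (a * inv a) = inv a := by simpa only [mul_assoc] using h2 a
  symm
  apply huniq
  · -- (a*b) * (inv b * inv a) * (a*b) = a*b
    simp only [mul_assoc, lift5 hcomm', lift4 (h1 a), hb]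
  · -- (inv b * inv a) * (a*b) * (inv b * inv a) = inv b * inv a
    simp only [mul_assoc, lift5 hcomm2', lift4 (h2 b), hia]

include h1 h2 huniq in
private lemma conj_idem (a : S) {e : S} (he : e * e = e) :
    (a * e * inv a) * (a * e * inv a) = a * e * inv a := by
  have hcomm : (inv a * a) * e = e * (inv a * a) :=
    idem_comm inv h1 h2 huniq (ia_idem inv h2 a) he
  have hcomm' : inv a * a * e = e * (inv a * a) := by
    simpa only [← mul_assoc] using hcomm
  have hia : inv a * (a * inv a) = inv a := by simpa only [mul_assoc] using h2 a
  simp only [mul_assoc, lift4 hcomm', lift3 he, hia]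

end AuxIS


/-- `μ` is the largest idempotent-separating congruence on an inverse
semigroup. -/
theorem mu_largest_idempotent_separating {S : Type*} [Semigroup S] (inv : S → S)
    (h1 : ∀ a : S, a * inv a * a = a)
    (h2 : ∀ a : S, inv a * a * inv a = inv a)
    (huniq : ∀ a b : S, a * b * a = a → b * a * b = b → b = inv a) :
    Equivalence (muRel inv) ∧
    (∀ a b c d : S, muRel inv a b → muRel inv c d → muRel inv (a * c) (b * d)) ∧
    (∀ e f : S, e * e = e → f * f = f → muRel inv e f → e = f) ∧
    (∀ ρ : S → S → Prop, Equivalence ρ →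
      (∀ a b c d : S, ρ a b → ρ c d → ρ (a * c) (b * d)) →
      (∀ e f : S, e * e = e → f * f = f → ρ e f → e = f) →
      ∀ s t : S, ρ s t → muRel inv s t) := by
  refine ⟨⟨fun s e he => rfl, fun h e he => (h e he).symm,
    fun h h' e he => (h e he).trans (h' e he)⟩, ?_, ?_, ?_⟩
  · -- compatibility
    intro a b c d hab hcd e he
    rw [inv_mul inv h1 h2 huniq a c, inv_mul inv h1 h2 huniq b d]
    have hconj := conj_idem inv h1 h2 huniq c he
    calc a * c * e * (inv c * inv a)
        = a * (c * e * inv c) * inv a := by simp only [mul_assoc]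
      _ = b * (c * e * inv c) * inv b := hab _ hconj
      _ = b * (d * e * inv d) * inv b := by rw [hcd e he]
      _ = b * d * e * (inv d * inv b) := by simp only [mul_assoc]
  · -- idempotent separating
    intro e f he hf hmu
    have h3 : e = f * e * f := by
      have h := hmu e he
      rw [inv_idem inv huniq he, inv_idem inv huniq hf, he, he] at h
      exact h
    have h4 : e * f * e = f := by
      have h := hmu f hf
      rw [inv_idem inv huniq he, inv_idem inv huniq hf, hf, hf] at h
      exact h
    have comm := idem_comm inv h1 h2 huniq he hf
    rw [comm, mul_assoc, he] at h4
    rw [mul_assoc, comm, ← mul_assoc, hf] at h3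
    exact h3.trans h4
  · -- largest
    intro ρ hEq hComp hSep s t hst
    have rho_of_eq : ∀ {a b : S}, a = b → ρ a b := fun h => h ▸ hEq.refl _
    have lallement : ∀ a : S, ρ (a * a) a → ∃ g : S, g * g = g ∧ ρ a g := by
      intro a ha
      refine ⟨a * inv (a * a) * a, ?_, ?_⟩
      · have hB0 : inv (a * a) * a * a * inv (a * a) = inv (a * a) := by
          rw [mul_assoc (inv (a * a)) a a]; exact h2 (a * a)
        simp only [mul_assoc, lift5 hB0]
      · have step : ρ (a * a * inv (a * a) * (a * a)) (a * inv (a * a) * a) :=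
          hComp _ _ _ _ (hComp _ _ _ _ ha (hEq.refl (inv (a * a)))) ha
        rw [h1 (a * a)] at step
        exact hEq.trans (hEq.symm ha) step
    have class_comm : ∀ u v : S, ρ (u * u) u → ρ (v * v) v → ρ (u * v) (v * u) := by
      intro u v hu hv
      obtain ⟨g, hgg, hug⟩ := lallement u hu
      obtain ⟨k, hkk, hvk⟩ := lallement v hv
      have hcomm := idem_comm inv h1 h2 huniq hgg hkk
      have huv : ρ (u * v) (g * k) := hComp _ _ _ _ hug hvk
      have hvu : ρ (v * u) (k * g) := hComp _ _ _ _ hvk hug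
      rw [hcomm] at huv
      exact hEq.trans huv (hEq.symm hvu)
    have hinv_pres : ∀ a b : S, ρ a b → ρ (inv a) (inv b) := by
      intro a b hab
      have hy1 : ρ (a * inv b * a) a := by
        have h := hComp _ _ _ _ (hComp _ _ _ _ hab (hEq.refl (inv b))) hab
        rw [h1 b] at h
        exact hEq.trans h (hEq.symm hab)
      have hy2 : ρ (inv b * a * inv b) (inv b) := by
        have h := hComp _ _ _ _ (hComp _ _ _ _ (hEq.refl (inv b)) hab) (hEq.refl (inv b))
        rw [h2 b] at h
        exact h
      have h_xa : ρ ((inv a * a) * (inv a * a)) (inv a * a) := rho_of_eq (ia_idem inv h2 a)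
      have h_ax : ρ ((a * inv a) * (a * inv a)) (a * inv a) := rho_of_eq (ai_idem inv h1 a)
      have h_ya : ρ ((inv b * a) * (inv b * a)) (inv b * a) := by
        have e1 : (inv b * a) * (inv b * a) = inv b * (a * inv b * a) := by
          simp only [mul_assoc]
        rw [e1]
        exact hComp _ _ _ _ (hEq.refl (inv b)) hy1
      have h_ay : ρ ((a * inv b) * (a * inv b)) (a * inv b) := by
        have e1 : (a * inv b) * (a * inv b) = a * (inv b * a * inv b) := by
          simp only [mul_assoc]
        rw [e1]
        exact hComp _ _ _ _ (hEq.refl a) hy2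
      have chain1 : ρ (inv a) (inv b * a * inv a) := by
        have s1 : ρ (inv a) (inv a * a * inv a) := rho_of_eq (h2 a).symm
        have s2 : ρ (inv a * a * inv a) (inv a * (a * inv b * a) * inv a) :=
          hComp _ _ _ _ (hComp _ _ _ _ (hEq.refl (inv a)) (hEq.symm hy1)) (hEq.refl (inv a))
        have e2 : inv a * (a * inv b * a) * inv a
            = ((inv a * a) * (inv b * a)) * inv a := by simp only [mul_assoc]
        have t4 := class_comm _ _ h_xa h_ya
        have t5 := hComp _ _ _ _ t4 (hEq.refl (inv a))
        have e4 : ((inv b * a) * (inv a * a)) * inv a = inv b * a * inv a := by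
          have := h2 a
          simp only [mul_assoc] at this ⊢
          rw [this]
        exact hEq.trans s1 (hEq.trans s2 (hEq.trans (rho_of_eq e2)
          (hEq.trans t5 (rho_of_eq e4))))
      have chain2 : ρ (inv b) (inv b * a * inv a) := by
        have d1 : ρ (inv b) (inv b * a * inv b) := hEq.symm hy2
        have d2 : ρ (inv b * a * inv b) (inv b * (a * inv a * a) * inv b) :=
          rho_of_eq (by rw [h1 a])
        have d3 : inv b * (a * inv a * a) * inv b
            = inv b * ((a * inv a) * (a * inv b)) := by simp only [mul_assoc]
        have d4 : ρ (inv b * ((a * inv a) * (a * inv b)))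
            (inv b * ((a * inv b) * (a * inv a))) :=
          hComp _ _ _ _ (hEq.refl (inv b)) (class_comm _ _ h_ax h_ay)
        have d5 : inv b * ((a * inv b) * (a * inv a))
            = (inv b * a * inv b) * (a * inv a) := by simp only [mul_assoc]
        have d6 : ρ ((inv b * a * inv b) * (a * inv a)) (inv b * (a * inv a)) :=
          hComp _ _ _ _ hy2 (hEq.refl (a * inv a))
        have d7 : inv b * (a * inv a) = inv b * a * inv a := (mul_assoc _ _ _).symm
        exact hEq.trans d1 (hEq.trans d2 (hEq.trans (rho_of_eq d3)
          (hEq.trans d4 (hEq.trans (rho_of_eq d5) (hEq.trans d6 (rho_of_eq d7))))))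
      exact hEq.trans chain1 (hEq.symm chain2)
    intro e he
    have hq : ρ (s * e * inv s) (t * e * inv t) :=
      hComp _ _ _ _ (hComp _ _ _ _ hst (hEq.refl e)) (hinv_pres s t hst)
    exact hSep _ _ (conj_idem inv h1 h2 huniq s he) (conj_idem inv h1 h2 huniq t he) hq
end
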